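/- Let U be a d×k real matrix with Uᵀ U = I_k and P = U Uᵀ, let F be a map from n×d real matrices to n×m real matrices that is L-Lipschitz with respect to the Frobenius norm, and define F_dfa(H) = F(H P). Let Δ be a random n×d real matrix whose distribution is invariant under right multiplication by every d×d orthogonal matrix and which satisfies ‖Δ‖_F ≤ ε almost surely. Then for every fixed matrix H, the expected output deviation satisfies E[‖F_dfa(H + Δ) − F_dfa(H)‖_F] ≤ L·√(k/d)·ε. -/

import Mathlib

/-!
Since `Uᵀ U = 1`, right multiplication by `Uᵀ` preserves the Frobenius norm, so the Lipschitz
bound controls the deviation by `L ‖Δ U‖_F`, and by Jensen `E ‖Δ U‖_F ≤ (E ‖Δ U‖_F²)^{1/2}`.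
Any unit vector is carried to any other by an orthogonal matrix (a reflection), so orthogonal
invariance makes `E ‖Δ v‖²` the same number `c` for every unit vector `v`. Summing over the `k`
orthonormal columns of `U` and over the `d` columns of the identity gives `E ‖Δ U‖_F² = k c` and
`E ‖Δ‖_F² = d c`, hence `E ‖Δ U‖_F² = (k/d) E ‖Δ‖_F² ≤ (k/d) ε²`.
-/

open MeasureTheory Matrix

/-- The Frobenius norm of a real matrix: the square root of the sum of squares of all entries. -/
noncomputable def frobNorm {a b : ℕ} (A : Matrix (Fin a) (Fin b) ℝ) : ℝ :=
  Real.sqrt (∑ i, ∑ j, (A i j) ^ 2)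

/-- The product σ-algebra on real matrices (entrywise). -/
instance matrixMeasurableSpace {m n : Type*} : MeasurableSpace (Matrix m n ℝ) :=
  inferInstanceAs (MeasurableSpace (m → n → ℝ))

instance matrixBorelSpace {m n : Type*} [Countable m] [Countable n] :
    BorelSpace (Matrix m n ℝ) :=
  inferInstanceAs (BorelSpace (m → n → ℝ))

section Frobenius

variable {a b r : ℕ}

lemma frobNorm_nonneg (A : Matrix (Fin a) (Fin b) ℝ) : 0 ≤ frobNorm A :=
  Real.sqrt_nonneg _

lemma frobNorm_sq (A : Matrix (Fin a) (Fin b) ℝ) : frobNorm A ^ 2 = ∑ i, ∑ j, A i j ^ 2 :=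
  Real.sq_sqrt (by positivity)

lemma continuous_frobNorm : Continuous (frobNorm : Matrix (Fin a) (Fin b) ℝ → ℝ) := by
  unfold frobNorm
  fun_prop

lemma frobNorm_eq_sqrt_trace (A : Matrix (Fin a) (Fin b) ℝ) :
    frobNorm A = √(A * Aᵀ).trace := by
  simp [frobNorm, Matrix.trace, Matrix.mul_apply, sq]

lemma frobNorm_mul_transpose_of_orthonormal {k : ℕ} (B : Matrix (Fin a) (Fin k) ℝ)
    {U : Matrix (Fin b) (Fin k) ℝ} (hU : Uᵀ * U = 1) : frobNorm (B * Uᵀ) = frobNorm B := by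
  rw [frobNorm_eq_sqrt_trace, frobNorm_eq_sqrt_trace, Matrix.transpose_mul,
    Matrix.transpose_transpose, Matrix.mul_assoc, ← Matrix.mul_assoc Uᵀ, hU, Matrix.one_mul]

lemma frobNorm_sub_le_of_lipschitz_proj {n d k m : ℕ} {U : Matrix (Fin d) (Fin k) ℝ}
    (hU : Uᵀ * U = 1) {F : Matrix (Fin n) (Fin d) ℝ → Matrix (Fin n) (Fin m) ℝ} {L : ℝ}
    (hF : ∀ H₁ H₂, frobNorm (F H₁ - F H₂) ≤ L * frobNorm (H₁ - H₂))
    (H D : Matrix (Fin n) (Fin d) ℝ) :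
    frobNorm (F ((H + D) * (U * Uᵀ)) - F (H * (U * Uᵀ))) ≤ L * frobNorm (D * U) := by
  have hdiff : (H + D) * (U * Uᵀ) - H * (U * Uᵀ) = D * U * Uᵀ := by
    rw [Matrix.add_mul, add_sub_cancel_left, Matrix.mul_assoc]
  rw [← frobNorm_mul_transpose_of_orthonormal _ hU, ← hdiff]
  exact hF _ _

lemma frobNorm_mul_sq_eq_sum_mulVec (A : Matrix (Fin a) (Fin b) ℝ) (V : Matrix (Fin b) (Fin r) ℝ) :
    frobNorm (A * V) ^ 2 = ∑ j, ∑ i, (A *ᵥ Vᵀ j) i ^ 2 := by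
  rw [frobNorm_sq, Finset.sum_comm]
  rfl

lemma sum_sq_mulVec_le (A : Matrix (Fin a) (Fin b) ℝ) (v : Fin b → ℝ) :
    ∑ i, (A *ᵥ v) i ^ 2 ≤ frobNorm A ^ 2 * ∑ j, v j ^ 2 := by
  rw [frobNorm_sq, Finset.sum_mul]
  exact Finset.sum_le_sum fun i _ => Finset.sum_mul_sq_le_sq_mul_sq Finset.univ (A i) v

lemma frobNorm_mul_sq_le (A : Matrix (Fin a) (Fin b) ℝ) (V : Matrix (Fin b) (Fin r) ℝ) :
    frobNorm (A * V) ^ 2 ≤ frobNorm A ^ 2 * frobNorm V ^ 2 := by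
  have hV : frobNorm V ^ 2 = ∑ j, ∑ l, Vᵀ j l ^ 2 := by
    rw [frobNorm_sq, Finset.sum_comm]
    rfl
  rw [frobNorm_mul_sq_eq_sum_mulVec, hV, Finset.mul_sum]
  exact Finset.sum_le_sum fun j _ => sum_sq_mulVec_le A (Vᵀ j)

lemma sum_sq_transpose_of_orthonormal {V : Matrix (Fin b) (Fin r) ℝ} (hV : Vᵀ * V = 1)
    (j : Fin r) : ∑ l, Vᵀ j l ^ 2 = 1 := by
  simpa [Matrix.mul_apply, sq] using congrFun (congrFun hV j) j

lemma exists_orthogonal_mulVec_eq (u v : Fin b → ℝ) (h : ∑ i, u i ^ 2 = ∑ i, v i ^ 2) :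
    ∃ O : Matrix (Fin b) (Fin b) ℝ, Oᵀ * O = 1 ∧ O *ᵥ u = v := by
  let e := EuclideanSpace.basisFun (Fin b) ℝ
  have hnorm : ‖WithLp.toLp 2 u‖ = ‖WithLp.toLp 2 v‖ := by
    simp [EuclideanSpace.norm_eq, h]
  let R := (ℝ ∙ (WithLp.toLp 2 u - WithLp.toLp 2 v))ᗮ.reflection
  refine ⟨LinearMap.toMatrix e.toBasis e.toBasis R.toLinearEquiv.toLinearMap, ?_, ?_⟩
  · exact Matrix.mem_unitaryGroup_iff'.1 (R.toMatrix_mem_unitaryGroup e e)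
  · have := LinearMap.toMatrix_mulVec_repr e.toBasis e.toBasis R.toLinearEquiv.toLinearMap
      (WithLp.toLp 2 u)
    simp only [LinearEquiv.coe_coe, LinearIsometryEquiv.coe_toLinearEquiv, R,
      Submodule.reflection_sub hnorm] at this
    exact this

end Frobenius

section Isotropic

variable {Ω : Type*} [MeasurableSpace Ω] {μ : Measure Ω}

lemma sq_integral_le_integral_sq [IsProbabilityMeasure μ] {f : Ω → ℝ} (hf : MemLp f 2 μ) :
    (∫ ω, f ω ∂μ) ^ 2 ≤ ∫ ω, f ω ^ 2 ∂μ := by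
  have hvar := ProbabilityTheory.variance_nonneg f μ
  rw [ProbabilityTheory.variance_eq_sub hf] at hvar
  simpa using hvar

variable {n d r : ℕ} {Δ : Ω → Matrix (Fin n) (Fin d) ℝ}

def IsRightOrthogonallyInvariant (Δ : Ω → Matrix (Fin n) (Fin d) ℝ) (μ : Measure Ω) : Prop :=
  ∀ O : Matrix (Fin d) (Fin d) ℝ, Oᵀ * O = 1 → Measure.map (fun ω => Δ ω * O) μ = Measure.map Δ μ

lemma IsRightOrthogonallyInvariant.integral_sum_sq_mulVec_eq (hΔ : AEMeasurable Δ μ)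
    (hinv : IsRightOrthogonallyInvariant Δ μ) {u v : Fin d → ℝ}
    (h : ∑ i, u i ^ 2 = ∑ i, v i ^ 2) :
    ∫ ω, ∑ i, (Δ ω *ᵥ u) i ^ 2 ∂μ = ∫ ω, ∑ i, (Δ ω *ᵥ v) i ^ 2 ∂μ := by
  obtain ⟨O, hO, hOv⟩ := exists_orthogonal_mulVec_eq v u h.symm
  have hg : Measurable fun A : Matrix (Fin n) (Fin d) ℝ => ∑ i, (A *ᵥ v) i ^ 2 :=
    (by fun_prop : Continuous _).measurable
  have hΔO : AEMeasurable (fun ω => Δ ω * O) μ :=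
    (by fun_prop : Continuous fun A : Matrix (Fin n) (Fin d) ℝ => A * O).measurable
      |>.comp_aemeasurable hΔ
  calc ∫ ω, ∑ i, (Δ ω *ᵥ u) i ^ 2 ∂μ = ∫ ω, ∑ i, ((Δ ω * O) *ᵥ v) i ^ 2 ∂μ := by
        simp_rw [← Matrix.mulVec_mulVec, hOv]
    _ = ∫ A, ∑ i, (A *ᵥ v) i ^ 2 ∂(Measure.map (fun ω => Δ ω * O) μ) :=
        (integral_map hΔO hg.aestronglyMeasurable).symm
    _ = ∫ ω, ∑ i, (Δ ω *ᵥ v) i ^ 2 ∂μ := by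
        rw [hinv O hO, integral_map hΔ hg.aestronglyMeasurable]

lemma integrable_sum_sq_mulVec (hΔ : AEMeasurable Δ μ)
    (h2 : Integrable (fun ω => frobNorm (Δ ω) ^ 2) μ) (v : Fin d → ℝ) :
    Integrable (fun ω => ∑ i, (Δ ω *ᵥ v) i ^ 2) μ := by
  refine (h2.mul_const (∑ j, v j ^ 2)).mono' ?_ (ae_of_all _ fun ω => ?_)
  · exact ((by fun_prop : Continuous fun A : Matrix (Fin n) (Fin d) ℝ => ∑ i, (A *ᵥ v) i ^ 2)
      |>.measurable.comp_aemeasurable hΔ).aestronglyMeasurable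
  · rw [Real.norm_of_nonneg (by positivity)]
    exact sum_sq_mulVec_le (Δ ω) v

lemma memLp_two_frobNorm_mul (hΔ : AEMeasurable Δ μ)
    (h2 : Integrable (fun ω => frobNorm (Δ ω) ^ 2) μ) (V : Matrix (Fin d) (Fin r) ℝ) :
    MemLp (fun ω => frobNorm (Δ ω * V)) 2 μ := by
  have hmeas : AEMeasurable (fun ω => frobNorm (Δ ω * V)) μ :=
    (continuous_frobNorm.comp (by fun_prop : Continuous fun A : Matrix (Fin n) (Fin d) ℝ => A * V))
      |>.measurable.comp_aemeasurable hΔ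
  rw [memLp_two_iff_integrable_sq hmeas.aestronglyMeasurable]
  refine (h2.mul_const (frobNorm V ^ 2)).mono' (hmeas.pow_const 2).aestronglyMeasurable
    (ae_of_all _ fun ω => ?_)
  rw [Real.norm_of_nonneg (by positivity)]
  exact frobNorm_mul_sq_le (Δ ω) V

lemma IsRightOrthogonallyInvariant.integral_frobNorm_mul_sq_eq_mul (hΔ : AEMeasurable Δ μ)
    (hinv : IsRightOrthogonallyInvariant Δ μ) (h2 : Integrable (fun ω => frobNorm (Δ ω) ^ 2) μ)
    {e : Fin d → ℝ} (he : ∑ i, e i ^ 2 = 1) {V : Matrix (Fin d) (Fin r) ℝ} (hV : Vᵀ * V = 1) :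
    ∫ ω, frobNorm (Δ ω * V) ^ 2 ∂μ = r * ∫ ω, ∑ i, (Δ ω *ᵥ e) i ^ 2 ∂μ := by
  simp_rw [frobNorm_mul_sq_eq_sum_mulVec]
  rw [integral_finsetSum Finset.univ fun j _ => integrable_sum_sq_mulVec hΔ h2 (Vᵀ j)]
  simp_rw [hinv.integral_sum_sq_mulVec_eq hΔ ((sum_sq_transpose_of_orthonormal hV _).trans he.symm)]
  simp

lemma IsRightOrthogonallyInvariant.integral_frobNorm_mul_sq_eq_div_mul (hΔ : AEMeasurable Δ μ)
    (hinv : IsRightOrthogonallyInvariant Δ μ) (h2 : Integrable (fun ω => frobNorm (Δ ω) ^ 2) μ)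
    {V : Matrix (Fin d) (Fin r) ℝ} (hV : Vᵀ * V = 1) :
    ∫ ω, frobNorm (Δ ω * V) ^ 2 ∂μ = r / d * ∫ ω, frobNorm (Δ ω) ^ 2 ∂μ := by
  -- for `d = 0` both sides vanish, the right one because `r / 0 = 0`
  rcases Nat.eq_zero_or_pos d with rfl | hd
  · simp [frobNorm]
  · have he : ∑ i, (Pi.single ⟨0, hd⟩ 1 : Fin d → ℝ) i ^ 2 = 1 := by
      simp [Pi.single_apply, sq]
    have hfull := hinv.integral_frobNorm_mul_sq_eq_mul hΔ h2 he (r := d) (V := 1) (by simp)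
    rw [hinv.integral_frobNorm_mul_sq_eq_mul hΔ h2 he hV]
    simp only [Matrix.mul_one] at hfull
    rw [hfull]
    field_simp

lemma integrable_frobNorm_sq_of_ae_le [IsFiniteMeasure μ] (hΔ : AEMeasurable Δ μ) {ε : ℝ}
    (hbound : ∀ᵐ ω ∂μ, frobNorm (Δ ω) ≤ ε) : Integrable (fun ω => frobNorm (Δ ω) ^ 2) μ := by
  refine Integrable.of_bound
    ((continuous_frobNorm.measurable.comp_aemeasurable hΔ).pow_const 2).aestronglyMeasurable
    (ε ^ 2) ?_
  filter_upwards [hbound] with ω hω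
  rw [Real.norm_of_nonneg (by positivity)]
  exact pow_le_pow_left₀ (frobNorm_nonneg _) hω 2

lemma IsRightOrthogonallyInvariant.integral_frobNorm_mul_le [IsProbabilityMeasure μ]
    (hΔ : AEMeasurable Δ μ) (hinv : IsRightOrthogonallyInvariant Δ μ) {ε : ℝ}
    (hbound : ∀ᵐ ω ∂μ, frobNorm (Δ ω) ≤ ε) {V : Matrix (Fin d) (Fin r) ℝ} (hV : Vᵀ * V = 1) :
    ∫ ω, frobNorm (Δ ω * V) ∂μ ≤ √(r / d) * ε := by
  have hε : 0 ≤ ε := by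
    obtain ⟨ω, hω⟩ := hbound.exists
    exact (frobNorm_nonneg _).trans hω
  have h2 := integrable_frobNorm_sq_of_ae_le hΔ hbound
  have hsecond : ∫ ω, frobNorm (Δ ω) ^ 2 ∂μ ≤ ε ^ 2 := by
    refine (integral_mono_ae h2 (integrable_const (ε ^ 2)) ?_).trans_eq (by simp)
    filter_upwards [hbound] with ω hω
    exact pow_le_pow_left₀ (frobNorm_nonneg _) hω 2
  calc ∫ ω, frobNorm (Δ ω * V) ∂μ ≤ √(∫ ω, frobNorm (Δ ω * V) ^ 2 ∂μ) :=
        Real.le_sqrt_of_sq_le (sq_integral_le_integral_sq (memLp_two_frobNorm_mul hΔ h2 V))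
    _ = √(r / d * ∫ ω, frobNorm (Δ ω) ^ 2 ∂μ) := by
        rw [hinv.integral_frobNorm_mul_sq_eq_div_mul hΔ h2 hV]
    _ ≤ √(r / d * ε ^ 2) := by gcongr
    _ = √(r / d) * ε := by rw [Real.sqrt_mul (by positivity), Real.sqrt_sq hε]

end Isotropic

/-- Let `U` have orthonormal columns, `P = U * Uᵀ`, and let `F` be `L`-Lipschitz
in the Frobenius norm, with `F_dfa(H) = F(H P)`. If the distribution of a random matrix `Δ` is
invariant under right multiplication by every orthogonal matrix and `‖Δ‖_F ≤ ε` almost surely,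
then for every fixed `H`, `E[‖F_dfa(H + Δ) − F_dfa(H)‖_F] ≤ L · √(k/d) · ε`. -/
theorem dfa_expected_perturbation_bound {n d k m : ℕ} {Ω : Type*} [MeasurableSpace Ω]
    (μ : Measure Ω) [IsProbabilityMeasure μ]
    (U : Matrix (Fin d) (Fin k) ℝ) (hU : Uᵀ * U = 1)
    (F : Matrix (Fin n) (Fin d) ℝ → Matrix (Fin n) (Fin m) ℝ) (L : ℝ) (hL : 0 ≤ L)
    (hF : ∀ H₁ H₂ : Matrix (Fin n) (Fin d) ℝ, frobNorm (F H₁ - F H₂) ≤ L * frobNorm (H₁ - H₂))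
    (Δ : Ω → Matrix (Fin n) (Fin d) ℝ) (hΔ : AEMeasurable Δ μ)
    (hinv : ∀ O : Matrix (Fin d) (Fin d) ℝ, Oᵀ * O = 1 →
      Measure.map (fun ω => Δ ω * O) μ = Measure.map Δ μ)
    (ε : ℝ) (hbound : ∀ᵐ ω ∂μ, frobNorm (Δ ω) ≤ ε) :
    ∀ H : Matrix (Fin n) (Fin d) ℝ,
      (∫ ω, frobNorm (F ((H + Δ ω) * (U * Uᵀ)) - F (H * (U * Uᵀ))) ∂μ)
        ≤ L * Real.sqrt ((k : ℝ) / d) * ε := by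
  intro H
  have hU2 := memLp_two_frobNorm_mul hΔ (integrable_frobNorm_sq_of_ae_le hΔ hbound) U
  calc ∫ ω, frobNorm (F ((H + Δ ω) * (U * Uᵀ)) - F (H * (U * Uᵀ))) ∂μ
      ≤ ∫ ω, L * frobNorm (Δ ω * U) ∂μ :=
        integral_mono_of_nonneg (ae_of_all _ fun _ => frobNorm_nonneg _)
          ((hU2.integrable one_le_two).const_mul L)
          (ae_of_all _ fun ω => frobNorm_sub_le_of_lipschitz_proj hU hF H (Δ ω))
    _ = L * ∫ ω, frobNorm (Δ ω * U) ∂μ := integral_const_mul L _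
    _ ≤ L * (√(k / d) * ε) := by
        gcongr
        exact IsRightOrthogonallyInvariant.integral_frobNorm_mul_le hΔ hinv hbound hU
    _ = L * √(k / d) * ε := (mul_assoc _ _ _).symm
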